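/- Let Γ be a nonempty graph and for t ≥ 1 let a_t = lim_{n→∞} μ(contains Γ_t, n), where μ(P, n) is the maximum fraction of graphs on {1,...,n} in a P-intersecting family and Γ_t is t disjoint copies of Γ. Then a_{k+l} ≥ a_k · a_l for all k, l ≥ 1. -/

import Mathlib

/-- `G` contains a copy of `Γ`. -/
def ContainsCopy {α β : Type*} (Γ : SimpleGraph α) (G : SimpleGraph β) : Prop :=
  ∃ f : α ↪ β, ∀ a b, Γ.Adj a b → G.Adj (f a) (f b)

/-- `t` vertex-disjoint copies of `Γ`. -/
def disjointUnion {α : Type*} (Γ : SimpleGraph α) (t : ℕ) : SimpleGraph (α × Fin t) where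
  Adj x y := x.2 = y.2 ∧ Γ.Adj x.1 y.1
  symm := ⟨fun x y h => ⟨h.1.symm, Γ.adj_symm h.2⟩⟩
  loopless := ⟨fun x h => Γ.loopless.irrefl _ h.2⟩

/-- `μ(P, n)`: the maximum fraction of graphs on `{1,…,n}` in a `P`-intersecting family. -/
noncomputable def mu (n : ℕ) (P : SimpleGraph (Fin n) → Prop) : ℝ :=
  sSup {x : ℝ | ∃ F : Set (SimpleGraph (Fin n)),
    (∀ G ∈ F, ∀ H ∈ F, P (G ⊓ H)) ∧ x = F.ncard / 2 ^ n.choose 2}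

/-
Split `Fin (n + m)` into a block of size `n` and one of size `m`. A graph on `n + m` vertices is
the same as a graph on each block together with an arbitrary relation between the blocks. Given
optimal `Γ_k`- and `Γ_l`-intersecting families `F₁`, `F₂` on the two blocks, the graphs whose
restrictions lie in `F₁` and `F₂` form a family of density `μ(Γ_k, n) μ(Γ_l, m)` (the `2 ^ (n m)`
cross relations cancel against `2 ^ C(n + m, 2) = 2 ^ C(n, 2) 2 ^ C(m, 2) 2 ^ (n m)`), and any two
of its members meet in a graph containing `Γ_k` on the first block and `Γ_l` on the second, hence
`Γ_{k+l}`. Thus `μ(Γ_k, n) μ(Γ_l, n) ≤ μ(Γ_{k+l}, 2n)`, and the claim follows as `n → ∞`.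
-/

open SimpleGraph Filter

lemma containsCopy_iff_isContained {α β : Type*} {A : SimpleGraph α} {B : SimpleGraph β} :
    ContainsCopy A B ↔ A ⊑ B :=
  ⟨fun ⟨f, hf⟩ => ⟨⟨⟨f, hf _ _⟩, f.injective⟩⟩,
    fun ⟨f⟩ => ⟨⟨f, f.injective⟩, fun _ _ h => f.toHom.map_adj h⟩⟩

namespace SimpleGraph

lemma sum_isContained_of_comap {α β γ δ : Type*} {A : SimpleGraph α} {B : SimpleGraph β}
    {K : SimpleGraph (γ ⊕ δ)} (hA : A ⊑ K.comap Sum.inl) (hB : B ⊑ K.comap Sum.inr) :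
    A ⊕g B ⊑ K := by
  obtain ⟨f⟩ := hA
  obtain ⟨g⟩ := hB
  have hle : K.comap Sum.inl ⊕g K.comap Sum.inr ≤ K := by
    rintro (c | d) (c' | d') h <;> simp_all
  exact IsContained.mono_right
    ⟨⟨f.toHom.sum g.toHom, Sum.map_injective.2 ⟨f.injective, g.injective⟩⟩⟩ hle

def sumEquivProd (β γ : Type*) :
    SimpleGraph (β ⊕ γ) ≃ SimpleGraph β × SimpleGraph γ × (β → γ → Prop) where
  toFun K := (K.comap Sum.inl, K.comap Sum.inr, fun b c => K.Adj (.inl b) (.inr c))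
  invFun p :=
    { Adj := fun x y => match x, y with
        | .inl b, .inl b' => p.1.Adj b b'
        | .inl b, .inr c => p.2.2 b c
        | .inr c, .inl b => p.2.2 b c
        | .inr c, .inr c' => p.2.1.Adj c c'
      symm := ⟨by rintro (b | c) (b' | c') h <;> first | exact h | exact h.symm⟩
      loopless := ⟨by rintro (b | c) h <;> exact SimpleGraph.irrefl _ h⟩ }
  left_inv K := by
    ext (b | c) (b' | c')
    exacts [Iff.rfl, Iff.rfl, K.adj_comm _ _, Iff.rfl]
  right_inv _ := rfl

end SimpleGraph

def disjointUnionAddIso {α : Type*} (Γ : SimpleGraph α) (k l : ℕ) :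
    disjointUnion Γ (k + l) ≃g disjointUnion Γ k ⊕g disjointUnion Γ l where
  toEquiv := ((Equiv.refl α).prodCongr finSumFinEquiv.symm).trans (Equiv.prodSumDistrib _ _ _)
  map_rel_iff' := by
    rintro ⟨a, i⟩ ⟨b, j⟩
    induction i using Fin.addCases <;> induction j using Fin.addCases <;>
      simp [disjointUnion, Fin.ext_iff] <;> omega

lemma ContainsCopy.disjointUnion_add {α : Type*} {Γ : SimpleGraph α} {k l n m : ℕ}
    {K : SimpleGraph (Fin (n + m))}
    (hk : ContainsCopy (disjointUnion Γ k) (K.comap (Fin.castAdd m)))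
    (hl : ContainsCopy (disjointUnion Γ l) (K.comap (Fin.natAdd n))) :
    ContainsCopy (disjointUnion Γ (k + l)) K := by
  rw [containsCopy_iff_isContained] at *
  have hsum : disjointUnion Γ k ⊕g disjointUnion Γ l ⊑ K.comap finSumFinEquiv :=
    sum_isContained_of_comap hk hl
  exact .congr_left (disjointUnionAddIso Γ k l) (.congr_right (Iso.comap _ K).symm hsum)

lemma Nat.add_choose_two (n m : ℕ) : (n + m).choose 2 = n.choose 2 + m.choose 2 + n * m := by
  simp [Nat.add_choose_eq, Finset.Nat.antidiagonal_succ]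
  ring

lemma finite_muSet (n : ℕ) (P : SimpleGraph (Fin n) → Prop) :
    {x : ℝ | ∃ F : Set (SimpleGraph (Fin n)),
      (∀ G ∈ F, ∀ H ∈ F, P (G ⊓ H)) ∧ x = F.ncard / 2 ^ n.choose 2}.Finite :=
  (Set.finite_range fun F : Set (SimpleGraph (Fin n)) => (F.ncard : ℝ) / 2 ^ n.choose 2).subset
    fun _ ⟨F, _, hx⟩ => ⟨F, hx.symm⟩

lemma le_mu {n : ℕ} {P : SimpleGraph (Fin n) → Prop} {F : Set (SimpleGraph (Fin n))}
    (hF : ∀ G ∈ F, ∀ H ∈ F, P (G ⊓ H)) :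
    F.ncard / 2 ^ n.choose 2 ≤ mu n P :=
  le_csSup (finite_muSet n P).bddAbove ⟨F, hF, rfl⟩

lemma exists_eq_mu (n : ℕ) (P : SimpleGraph (Fin n) → Prop) :
    ∃ F : Set (SimpleGraph (Fin n)),
      (∀ G ∈ F, ∀ H ∈ F, P (G ⊓ H)) ∧ mu n P = F.ncard / 2 ^ n.choose 2 := by
  refine Set.Nonempty.csSup_mem ?_ (finite_muSet n P)
  exact ⟨0, ∅, by simp⟩

theorem mu_mul_mu_le_mu_add {n m : ℕ} {P : SimpleGraph (Fin n) → Prop}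
    {Q : SimpleGraph (Fin m) → Prop} {R : SimpleGraph (Fin (n + m)) → Prop}
    (hR : ∀ K : SimpleGraph (Fin (n + m)),
      P (K.comap (Fin.castAdd m)) → Q (K.comap (Fin.natAdd n)) → R K) :
    mu n P * mu m Q ≤ mu (n + m) R := by
  obtain ⟨F₁, hF₁, h₁⟩ := exists_eq_mu n P
  obtain ⟨F₂, hF₂, h₂⟩ := exists_eq_mu m Q
  let Φ := finSumFinEquiv.symm.simpleGraph.trans (sumEquivProd (Fin n) (Fin m))
  let F := Φ ⁻¹' F₁ ×ˢ F₂ ×ˢ Set.univ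
  have hF : ∀ G ∈ F, ∀ H ∈ F, R (G ⊓ H) := by
    rintro K ⟨hK₁, hK₂, -⟩ K' ⟨hK₁', hK₂', -⟩
    exact hR _ (hF₁ _ hK₁ _ hK₁') (hF₂ _ hK₂ _ hK₂')
  have hcard : F.ncard = F₁.ncard * F₂.ncard * 2 ^ (n * m) := by
    rw [Set.ncard_preimage_of_injective_subset_range Φ.injective (by simp), Set.ncard_prod,
      Set.ncard_prod, Set.ncard_univ]
    simp [← pow_mul, mul_comm m n, mul_assoc]
  calc mu n P * mu m Q = F.ncard / 2 ^ (n + m).choose 2 := by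
        rw [h₁, h₂, hcard, Nat.add_choose_two]
        push_cast
        field_simp
        ring
    _ ≤ mu (n + m) R := le_mu hF

theorem limit_mu_supermultiplicative_general {α : Type*} (Γ : SimpleGraph α)
    (a : ℕ → ℝ)
    (ha : ∀ t, 1 ≤ t →
      Filter.Tendsto (fun n => mu n (fun K => ContainsCopy (disjointUnion Γ t) K))
        Filter.atTop (nhds (a t)))
    (k l : ℕ) (hk : 1 ≤ k) (hl : 1 ≤ l) :
    a k * a l ≤ a (k + l) :=
  le_of_tendsto_of_tendsto' ((ha k hk).mul (ha l hl))
    ((ha (k + l) (by omega)).comp (tendsto_atTop_mono (fun n => n.le_add_left n) tendsto_id))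
    fun _ => mu_mul_mu_le_mu_add fun _ => ContainsCopy.disjointUnion_add

/-- With `a t = lim_{n→∞} μ(contains Γ_t, n)`, we have `a (k+l) ≥ a k * a l`. -/
theorem limit_mu_supermultiplicative {α : Type*} (Γ : SimpleGraph α)
    (hΓ : Γ.edgeSet.Nonempty) (a : ℕ → ℝ)
    (ha : ∀ t, 1 ≤ t →
      Filter.Tendsto (fun n => mu n (fun K => ContainsCopy (disjointUnion Γ t) K))
        Filter.atTop (nhds (a t)))
    (k l : ℕ) (hk : 1 ≤ k) (hl : 1 ≤ l) :
    a k * a l ≤ a (k + l) :=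
  limit_mu_supermultiplicative_general Γ a ha k l hk hl
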